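/- For all n ≥ 6, a permutation π of {1,…,n} with π_{n−1} = n (the letter n in the second-to-last position) satisfies ssc(π) = n−3 if and only if one of the following holds: (a) π_n = 3; (b) 3 < π_n < n−1 and π ends with the suffix (n−1),1,n,π_n; (c) π_n = n−1 and π ends with the suffix (n−2),1,n,(n−1). -/

import Mathlib

/-- The largest letter of a word (`0` for the empty word). -/
def listMax (l : List ℕ) : ℕ := l.foldr max 0

lemma listMax_mem {l : List ℕ} (h : l ≠ []) : listMax l ∈ l := by
  induction l with
  | nil => simp at h
  | cons a t ih =>
    rcases eq_or_ne t [] with rfl | ht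
    · simp [listMax]
    · have ht' := ih ht
      have hcons : listMax (a :: t) = max a (listMax t) := rfl
      rcases le_total a (listMax t) with hle | hle
      · rw [hcons, max_eq_right hle]; exact List.mem_cons_of_mem _ ht'
      · rw [hcons, max_eq_left hle]; exact List.mem_cons_self

/-- The stack-sorting operator `S`: `S` of the empty word is the empty word, and
if `π` is nonempty, writing `π = L·m·R` where `m` is the greatest letter of `π`,
then `S(π) = S(L)·S(R)·m`. -/
def stackSort : List ℕ → List ℕ
  | [] => []
  | x :: xs =>
    stackSort ((x :: xs).take ((x :: xs).idxOf (listMax (x :: xs)))) ++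
      stackSort ((x :: xs).drop ((x :: xs).idxOf (listMax (x :: xs)) + 1)) ++
      [listMax (x :: xs)]
termination_by l => l.length
decreasing_by
  · have hm : listMax (x :: xs) ∈ x :: xs := listMax_mem (by simp)
    have hi : (x :: xs).idxOf (listMax (x :: xs)) < (x :: xs).length :=
      List.idxOf_lt_length_iff.mpr hm
    simp only [List.length_take, List.length_cons] at *
    omega
  · simp only [List.length_drop, List.length_cons]
    omega

/-- `π` is a permutation of `{1, …, n}`, viewed as a word containing each of
`1, …, n` exactly once. -/
def IsPermWord (n : ℕ) (π : List ℕ) : Prop := π.Perm (List.range' 1 n)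

/-- The stack-sorting complexity of `π`: the least `k ≥ 0` such that `S^k(π)`
is the identity word `1, 2, …, n` (where `n` is the length of `π`). -/
noncomputable def ssc (π : List ℕ) : ℕ :=
  sInf {k : ℕ | stackSort^[k] π = List.range' 1 π.length}

/-!
Write `T l` for `S(l)` with its last letter, the maximum of `l`, removed (`stackSortInit`). For
a permutation, `S^k(π)` is the identity exactly when `T^k(π)` is increasing, and `T^k(w)` consists
of the `|w| - k` smallest letters of `w`. Since `n` directly precedes `x`, the word
`T^(k+2)(w ++ [n, x])` is `T^(k+2)(w)` followed by the maximum of `T^(k+1)(w)` and the minimum of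
`x` and the maximum of `T^k(w)`. So `ssc(π) = n - 3` is decided by the two and three smallest
letters of `w`: for `x = 3` it always holds, for `x < 3` never, and for `x ≥ 4` it holds exactly
when the two survivors `1, 2` come out in the order `2, 1`. Finally, `T` preserves and reflects the
property "ends with its maximum followed by `1`", which for `w` is condition (b) or (c).
-/

theorem le_listMax {l : List ℕ} {y : ℕ} (h : y ∈ l) : y ≤ listMax l := by
  induction l with
  | nil => simp at h
  | cons a t ih =>
    rcases List.mem_cons.mp h with rfl | ht
    · exact le_max_left _ _
    · exact (ih ht).trans (le_max_right _ _)

theorem listMax_eq_of_mem {l : List ℕ} {m : ℕ} (hm : m ∈ l) (hle : ∀ y ∈ l, y ≤ m) :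
    listMax l = m :=
  le_antisymm (hle _ (listMax_mem (List.ne_nil_of_mem hm))) (le_listMax hm)

theorem List.Perm.listMax_eq {l r : List ℕ} (h : l.Perm r) : listMax l = listMax r :=
  h.foldr_eq 0

theorem length_le_listMax {l : List ℕ} (hnd : l.Nodup) (hpos : ∀ y ∈ l, 0 < y) :
    l.length ≤ listMax l := by
  have hsub : l.toFinset ⊆ Finset.Icc 1 (listMax l) := fun y hy => by
    rw [List.mem_toFinset] at hy
    exact Finset.mem_Icc.2 ⟨hpos y hy, le_listMax hy⟩
  simpa [List.toFinset_card_of_nodup hnd] using Finset.card_le_card hsub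

theorem exists_eq_append_listMax_cons {l : List ℕ} (hl : l ≠ []) (hnd : l.Nodup) :
    ∃ T D : List ℕ, l = T ++ listMax l :: D ∧ (∀ y ∈ T, y < listMax l) ∧
      ∀ y ∈ D, y < listMax l := by
  obtain ⟨T, D, hTD⟩ := List.append_of_mem (listMax_mem hl)
  have hnd' := hTD ▸ hnd
  simp only [List.nodup_append, List.nodup_cons, List.mem_cons] at hnd'
  refine ⟨T, D, hTD, fun y hy => ?_, fun y hy => ?_⟩
  · refine (le_listMax (by rw [hTD]; simp [hy])).lt_of_ne ?_
    rintro rfl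
    exact hnd'.2.2 _ hy _ (Or.inl rfl) rfl
  · refine (le_listMax (by rw [hTD]; simp [hy])).lt_of_ne ?_
    rintro rfl
    exact hnd'.2.1.1 hy

theorem stackSort_nil : stackSort [] = [] := by
  rw [stackSort]

theorem stackSort_of_ne_nil {l : List ℕ} (hl : l ≠ []) :
    stackSort l = stackSort (l.take (l.idxOf (listMax l))) ++
      stackSort (l.drop (l.idxOf (listMax l) + 1)) ++ [listMax l] := by
  obtain ⟨a, t, rfl⟩ := List.exists_cons_of_ne_nil hl
  rw [stackSort]

theorem stackSort_append_cons_of_lt {L R : List ℕ} {m : ℕ} (hL : ∀ y ∈ L, y < m)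
    (hR : ∀ y ∈ R, y < m) : stackSort (L ++ m :: R) = stackSort L ++ stackSort R ++ [m] := by
  have hmax : listMax (L ++ m :: R) = m := listMax_eq_of_mem (by simp) fun y hy => by
    simp only [List.mem_append, List.mem_cons] at hy
    rcases hy with hy | rfl | hy
    exacts [(hL y hy).le, le_rfl, (hR y hy).le]
  have hidx : (L ++ m :: R).idxOf m = L.length := by
    rw [List.idxOf_append_of_notMem fun h => (hL m h).false]
    simp
  rw [stackSort_of_ne_nil (by simp), hmax, hidx]
  simp

theorem stackSort_perm {l : List ℕ} (hnd : l.Nodup) : (stackSort l).Perm l := by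
  rcases eq_or_ne l [] with rfl | hl
  · rw [stackSort_nil]
  obtain ⟨T, D, hTD, hT, hD⟩ := exists_eq_append_listMax_cons hl hnd
  have hnd' := hTD ▸ hnd
  have hT' := stackSort_perm (hnd'.sublist (List.sublist_append_left T _))
  have hD' := stackSort_perm (hnd'.sublist ((List.sublist_cons_self _ D).trans
    (List.sublist_append_right T _)))
  rw [hTD, stackSort_append_cons_of_lt hT hD]
  exact ((hT'.append hD').append_right _).trans
    ((List.perm_append_singleton _ _).trans List.perm_middle.symm)
termination_by l.length
decreasing_by all_goals (rw [hTD]; simp only [List.length_append, List.length_cons]; omega)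

theorem stackSort_of_pairwise {l : List ℕ} (hl : l.Pairwise (· < ·)) : stackSort l = l := by
  induction l using List.reverseRecOn with
  | nil => exact stackSort_nil
  | append_singleton init a ih =>
    rw [List.pairwise_append] at hl
    have := stackSort_append_cons_of_lt (R := []) (fun y hy => hl.2.2 y hy a (by simp))
      (by simp)
    simpa [ih hl.1, stackSort_nil] using this

def stackSortInit (l : List ℕ) : List ℕ := (stackSort l).dropLast

theorem stackSort_eq_stackSortInit_append {l : List ℕ} (hl : l ≠ []) :
    stackSort l = stackSortInit l ++ [listMax l] := by
  rw [stackSortInit, stackSort_of_ne_nil hl, List.dropLast_concat]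

theorem stackSortInit_perm_erase {l : List ℕ} (hnd : l.Nodup) :
    (stackSortInit l).Perm (l.erase (listMax l)) := by
  rcases eq_or_ne l [] with rfl | hl
  · simp [stackSortInit, stackSort_nil]
  have h := (List.perm_append_singleton _ _).symm.trans
    ((stackSort_eq_stackSortInit_append hl ▸ stackSort_perm hnd).trans
      (List.perm_cons_erase (listMax_mem hl)))
  exact List.perm_cons _ |>.1 h

theorem stackSortInit_nodup {l : List ℕ} (hnd : l.Nodup) : (stackSortInit l).Nodup :=
  (stackSortInit_perm_erase hnd).nodup_iff.2 (hnd.erase _)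

theorem mem_of_mem_stackSortInit {l : List ℕ} {y : ℕ} (hnd : l.Nodup)
    (hy : y ∈ stackSortInit l) : y ∈ l :=
  List.mem_of_mem_erase ((stackSortInit_perm_erase hnd).mem_iff.1 hy)

theorem lt_listMax_of_mem_stackSortInit {l : List ℕ} {y : ℕ} (hnd : l.Nodup)
    (hy : y ∈ stackSortInit l) : y < listMax l := by
  obtain ⟨hne, hy⟩ := hnd.mem_erase_iff.1 ((stackSortInit_perm_erase hnd).mem_iff.1 hy)
  exact (le_listMax hy).lt_of_ne hne

theorem length_stackSortInit {l : List ℕ} (hnd : l.Nodup) :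
    (stackSortInit l).length = l.length - 1 := by
  rcases eq_or_ne l [] with rfl | hl
  · simp [stackSortInit, stackSort_nil]
  rw [(stackSortInit_perm_erase hnd).length_eq, List.length_erase_of_mem (listMax_mem hl)]

theorem stackSortInit_append_pair {a : List ℕ} {b c : ℕ} (ha : a ≠ [])
    (hab : ∀ y ∈ a, y < b) (hbc : b ≠ c) :
    stackSortInit (a ++ [b, c]) = stackSortInit a ++ [listMax a, min b c] := by
  rcases hbc.lt_or_gt with hlt | hgt
  · have h := stackSort_append_cons_of_lt (L := a ++ [b]) (R := []) (m := c)
      (fun y hy => by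
        rcases List.mem_append.1 hy with hy | hy
        exacts [(hab y hy).trans hlt, List.mem_singleton.1 hy ▸ hlt]) (by simp)
    rw [stackSort_append_cons_of_lt (R := []) hab (by simp), stackSort_nil] at h
    rw [stackSortInit, List.append_cons a b [c], h, stackSort_eq_stackSortInit_append ha,
      min_eq_left hlt.le]
    simp
  · have h := stackSort_append_cons_of_lt (L := a) (R := [c]) hab (by simpa using hgt)
    have hc : stackSort [c] = [c] := stackSort_of_pairwise (List.pairwise_singleton _ _)
    rw [stackSortInit, h, hc, stackSort_eq_stackSortInit_append ha, min_eq_right hgt.le]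
    simp

section Iterates

variable {l : List ℕ}

theorem nodup_stackSortInit_iterate (hnd : l.Nodup) : ∀ k, (stackSortInit^[k] l).Nodup
  | 0 => hnd
  | k + 1 => by
    rw [Function.iterate_succ_apply']
    exact stackSortInit_nodup (nodup_stackSortInit_iterate hnd k)

theorem mem_of_mem_stackSortInit_iterate (hnd : l.Nodup) {y : ℕ} :
    ∀ {k}, y ∈ stackSortInit^[k] l → y ∈ l
  | 0, hy => hy
  | k + 1, hy => by
    rw [Function.iterate_succ_apply'] at hy
    exact mem_of_mem_stackSortInit_iterate hnd
      (mem_of_mem_stackSortInit (nodup_stackSortInit_iterate hnd k) hy)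

theorem length_stackSortInit_iterate (hnd : l.Nodup) :
    ∀ k, (stackSortInit^[k] l).length = l.length - k
  | 0 => rfl
  | k + 1 => by
    rw [Function.iterate_succ_apply', length_stackSortInit (nodup_stackSortInit_iterate hnd k),
      length_stackSortInit_iterate hnd k]
    omega

theorem lt_listMax_stackSortInit_iterate (hnd : l.Nodup) {k y : ℕ}
    (hy : y ∈ stackSortInit^[k + 1] l) : y < listMax (stackSortInit^[k] l) := by
  rw [Function.iterate_succ_apply'] at hy
  exact lt_listMax_of_mem_stackSortInit (nodup_stackSortInit_iterate hnd k) hy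

theorem stackSortInit_iterate_ne_nil (hnd : l.Nodup) {k : ℕ} (hk : k < l.length) :
    stackSortInit^[k] l ≠ [] := by
  rw [← List.length_pos_iff, length_stackSortInit_iterate hnd]
  omega

theorem listMax_stackSortInit_iterate_succ_lt (hnd : l.Nodup) {k : ℕ} (hk : k + 1 < l.length) :
    listMax (stackSortInit^[k + 1] l) < listMax (stackSortInit^[k] l) :=
  lt_listMax_stackSortInit_iterate hnd (listMax_mem (stackSortInit_iterate_ne_nil hnd hk))

end Iterates

theorem stackSortInit_iterate_append_pair {a : List ℕ} {b c : ℕ} (hnd : a.Nodup)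
    (hab : ∀ y ∈ a, y < b) (hcb : c < b) (hca : c ∉ a) {k : ℕ} (hk : k + 2 ≤ a.length) :
    stackSortInit^[k + 2] (a ++ [b, c]) = stackSortInit^[k + 2] a ++
      [listMax (stackSortInit^[k + 1] a), min c (listMax (stackSortInit^[k] a))] := by
  have hstep : ∀ j, j + 1 < a.length → ∀ q, listMax (stackSortInit^[j] a) ≠ q →
      stackSortInit (stackSortInit^[j + 1] a ++ [listMax (stackSortInit^[j] a), q]) =
        stackSortInit^[j + 2] a ++
          [listMax (stackSortInit^[j + 1] a), min (listMax (stackSortInit^[j] a)) q] := by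
    intro j hj q hq
    rw [stackSortInit_append_pair (stackSortInit_iterate_ne_nil hnd hj)
      (fun y => lt_listMax_stackSortInit_iterate hnd) hq,
      ← Function.iterate_succ_apply' stackSortInit]
  have hmax_mem : ∀ j, j < a.length → listMax (stackSortInit^[j] a) ∈ a := fun j hj =>
    mem_of_mem_stackSortInit_iterate hnd (listMax_mem (stackSortInit_iterate_ne_nil hnd hj))
  induction k with
  | zero =>
    have h1 : stackSortInit (a ++ [b, c]) = stackSortInit a ++ [listMax a, c] := by
      rw [stackSortInit_append_pair (List.ne_nil_of_length_pos (by omega)) hab hcb.ne',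
        min_eq_right hcb.le]
    rw [Function.iterate_succ_apply', Function.iterate_one, h1]
    exact (hstep 0 (by omega) c fun h => hca (h ▸ hmax_mem 0 (by omega))).trans
      (by rw [min_comm]; rfl)
  | succ k ih =>
    have hlt := listMax_stackSortInit_iterate_succ_lt hnd (k := k) (by omega)
    rw [Function.iterate_succ_apply', ih (by omega), hstep (k + 1) (by omega)]
    · congr 3
      omega
    · intro h
      rcases min_choice c (listMax (stackSortInit^[k] a)) with hc | hc <;> rw [hc] at h
      exacts [hca (h ▸ hmax_mem (k + 1) (by omega)), hlt.ne h]

theorem pairwise_stackSortInit_iterate_append_pair_iff {a : List ℕ} {b c : ℕ} (hnd : a.Nodup)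
    (hab : ∀ y ∈ a, y < b) (hcb : c < b) (hca : c ∉ a) {k : ℕ} (hk : k + 2 ≤ a.length) :
    (stackSortInit^[k + 2] (a ++ [b, c])).Pairwise (· < ·) ↔
      (stackSortInit^[k + 2] a).Pairwise (· < ·) ∧ listMax (stackSortInit^[k + 1] a) < c := by
  have hlt := listMax_stackSortInit_iterate_succ_lt hnd (k := k) (by omega)
  have hbelow : ∀ y ∈ stackSortInit^[k + 2] a, y < listMax (stackSortInit^[k + 1] a) := fun y =>
    lt_listMax_stackSortInit_iterate hnd
  rw [stackSortInit_iterate_append_pair hnd hab hcb hca hk, List.pairwise_append,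
    List.pairwise_pair, lt_min_iff]
  constructor
  · rintro ⟨hs, ⟨h, -⟩, -⟩
    exact ⟨hs, h⟩
  · rintro ⟨hs, h⟩
    refine ⟨hs, ⟨h, hlt⟩, fun y hy z hz => ?_⟩
    rcases List.mem_pair.1 hz with rfl | rfl
    exacts [hbelow y hy, lt_min ((hbelow y hy).trans h) ((hbelow y hy).trans hlt)]

theorem stackSort_iterate_perm {l : List ℕ} (hnd : l.Nodup) :
    ∀ k, (stackSort^[k] l).Perm l
  | 0 => List.Perm.refl l
  | k + 1 => by
    rw [Function.iterate_succ_apply']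
    have ih := stackSort_iterate_perm hnd k
    exact (stackSort_perm (ih.nodup_iff.2 hnd)).trans ih

theorem stackSort_iterate_succ {l : List ℕ} (hl : l ≠ []) (hnd : l.Nodup) :
    ∀ k, stackSort^[k + 1] l = stackSort^[k] (stackSortInit l) ++ [listMax l]
  | 0 => stackSort_eq_stackSortInit_append hl
  | k + 1 => by
    rw [Function.iterate_succ_apply', stackSort_iterate_succ hl hnd k,
      Function.iterate_succ_apply']
    refine stackSort_append_cons_of_lt (R := []) (fun y hy => ?_) (by simp) |>.trans ?_
    · exact lt_listMax_of_mem_stackSortInit hnd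
        ((stackSort_iterate_perm (stackSortInit_nodup hnd) k).mem_iff.1 hy)
    · rw [stackSort_nil, List.append_nil]

theorem pairwise_stackSort_iterate_iff {l : List ℕ} (hnd : l.Nodup) (k : ℕ) :
    (stackSort^[k] l).Pairwise (· < ·) ↔ (stackSortInit^[k] l).Pairwise (· < ·) := by
  induction k generalizing l with
  | zero => rfl
  | succ k ih =>
    rcases eq_or_ne l [] with rfl | hl
    · have hinit : stackSortInit [] = [] := by simp [stackSortInit, stackSort_nil]
      rw [Function.iterate_fixed stackSort_nil, Function.iterate_fixed hinit]
    rw [stackSort_iterate_succ hl hnd, Function.iterate_succ_apply,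
      ← ih (stackSortInit_nodup hnd), List.pairwise_append]
    simp only [List.pairwise_singleton, List.mem_singleton, forall_eq, true_and,
      and_iff_left_iff_imp]
    exact fun _ y hy => lt_listMax_of_mem_stackSortInit hnd
      ((stackSort_iterate_perm (stackSortInit_nodup hnd) k).mem_iff.1 hy)

theorem ssc_eq_succ_iff {n : ℕ} {π : List ℕ} (hπ : IsPermWord n π) (t : ℕ) :
    ssc π = t + 1 ↔
      (stackSortInit^[t + 1] π).Pairwise (· < ·) ∧
        ¬ (stackSortInit^[t] π).Pairwise (· < ·) := by
  have hlen : π.length = n := by rw [hπ.length_eq, List.length_range']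
  have hnd : π.Nodup := hπ.nodup_iff.2 List.nodup_range'
  have hsorted : (List.range' 1 n).Pairwise (· < ·) := List.pairwise_lt_range'
  have hmem : ∀ k, stackSort^[k] π = List.range' 1 π.length ↔
      (stackSortInit^[k] π).Pairwise (· < ·) := by
    intro k
    rw [← pairwise_stackSort_iterate_iff hnd, hlen]
    refine ⟨fun h => h ▸ hsorted, fun h => ?_⟩
    exact ((stackSort_iterate_perm hnd k).trans hπ).eq_of_pairwise' h hsorted
  have hup (k₁ k₂ : ℕ) (hk : k₁ ≤ k₂)
      (h : stackSort^[k₁] π = List.range' 1 π.length) :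
      stackSort^[k₂] π = List.range' 1 π.length := by
    obtain ⟨d, rfl⟩ := Nat.exists_eq_add_of_le hk
    rw [add_comm, Function.iterate_add_apply, h, hlen]
    exact Function.iterate_fixed (stackSort_of_pairwise hsorted) d
  rw [ssc, Nat.sInf_upward_closed_eq_succ_iff
    (s := {k | stackSort^[k] π = List.range' 1 π.length}) hup]
  exact and_congr (hmem _) (not_congr (hmem _))

theorem stackSortInit_iterate_perm_filter_le {l : List ℕ} (hnd : l.Nodup) (c : ℕ) :
    (stackSortInit^[(l.filter (c < ·)).length] l).Perm (l.filter (· ≤ c)) := by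
  generalize hk : (l.filter (c < ·)).length = k
  induction k generalizing l with
  | zero =>
    rw [List.length_eq_zero_iff, List.filter_eq_nil_iff] at hk
    rw [Function.iterate_zero_apply, List.filter_eq_self.2 fun y hy => by simpa using hk y hy]
  | succ k ih =>
    obtain ⟨y, hy⟩ := List.exists_mem_of_length_pos (l := l.filter (c < ·)) (by omega)
    have hy' := List.mem_filter.1 hy
    have hmax : c < listMax l := (decide_eq_true_iff.1 hy'.2).trans_le (le_listMax hy'.1)
    have hmax_mem : listMax l ∈ l.filter (c < ·) :=
      List.mem_filter.2 ⟨listMax_mem (List.ne_nil_of_mem hy'.1), decide_eq_true hmax⟩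
    have hgt :
        ((stackSortInit l).filter (c < ·)).Perm ((l.filter (c < ·)).erase (listMax l)) := by
      rw [List.erase_filter]
      exact (stackSortInit_perm_erase hnd).filter _
    have hle : ((stackSortInit l).filter (· ≤ c)).Perm (l.filter (· ≤ c)) := by
      rw [← List.erase_of_not_mem (a := listMax l) (l := l.filter (· ≤ c)) (by simp [hmax]),
        List.erase_filter]
      exact (stackSortInit_perm_erase hnd).filter _
    rw [Function.iterate_succ_apply]
    refine (ih (stackSortInit_nodup hnd) ?_).trans hle
    rw [hgt.length_eq, List.length_erase_of_mem hmax_mem, hk, Nat.add_sub_cancel]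

theorem stackSortInit_iterate_perm_of_forall_mem_iff {l E : List ℕ} {c k : ℕ} (hnd : l.Nodup)
    (hE : E.Nodup) (hmem : ∀ y, y ∈ E ↔ y ∈ l ∧ y ≤ c) (hk : l.length = k + E.length) :
    (stackSortInit^[k] l).Perm E := by
  have hle : (l.filter (· ≤ c)).Perm E :=
    (List.perm_ext_iff_of_nodup (hnd.filter _) hE).2 fun y => by simp [hmem]
  have hgt : (l.filter (c < ·)).length = k := by
    have := List.length_eq_length_filter_add (l := l) (· ≤ c)
    rw [hle.length_eq, List.filter_congr (p := fun y => !decide (y ≤ c)) (q := (c < ·))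
      fun y _ => by rw [← decide_not]; exact decide_eq_decide.2 not_le] at this
    omega
  exact hgt ▸ (stackSortInit_iterate_perm_filter_le hnd c).trans hle

def EndsWithMaxOne (l : List ℕ) : Prop := ∃ v, l = v ++ [listMax l, 1]

theorem endsWithMaxOne_stackSortInit_iff {l : List ℕ} (hnd : l.Nodup) (hpos : ∀ y ∈ l, 0 < y)
    (hlen : 3 ≤ l.length) : EndsWithMaxOne (stackSortInit l) ↔ EndsWithMaxOne l := by
  constructor
  · rintro ⟨v, hv⟩
    have hl : l ≠ [] := by rintro rfl; simp at hlen
    obtain ⟨T, D, hTD, hT, hD⟩ := exists_eq_append_listMax_cons hl hnd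
    have hnd' := hTD ▸ hnd
    have hpos' : ∀ y, y ∈ T ∨ y ∈ D → 0 < y := fun y hy => hpos y (by
      rw [hTD]; rcases hy with hy | hy <;> simp [hy])
    have hlT : l.length = T.length + D.length + 1 := by rw [hTD]; simp; omega
    have hlast : (stackSortInit l).getLast? = some 1 := by
      rw [hv]; simp
    rw [stackSortInit, hTD, stackSort_append_cons_of_lt hT hD, List.dropLast_concat] at hlast
    rcases eq_or_ne D [] with rfl | hD0
    · have hT0 : T ≠ [] := by rintro rfl; simp at hlT; omega
      rw [stackSort_nil, List.append_nil, stackSort_eq_stackSortInit_append hT0] at hlast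
      have hT1 : listMax T = 1 := by simpa using hlast
      have := length_le_listMax (hnd'.sublist (List.sublist_append_left T _))
        fun y hy => hpos' y (Or.inl hy)
      simp at hlT
      omega
    · rw [stackSort_eq_stackSortInit_append hD0] at hlast
      have hD1 : listMax D = 1 := by simpa using hlast
      have hDnd : D.Nodup := (hnd'.sublist (List.sublist_append_right T _)).of_cons
      have := length_le_listMax hDnd fun y hy => hpos' y (Or.inr hy)
      obtain ⟨d, rfl⟩ := (List.length_eq_one_iff (l := D)).1
        (by have := List.length_pos_iff.2 hD0; omega)
      obtain rfl : d = 1 := by simpa [listMax] using hD1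
      exact ⟨T, hTD⟩
  · rintro ⟨v, hv⟩
    generalize hM : listMax l = M at hv
    subst hv
    have hv0 : v ≠ [] := by rintro rfl; simp at hlen
    have hvM : ∀ y ∈ v, y < M := fun y hy => hM ▸ (le_listMax (by simp [hy])).lt_of_ne
      fun h => List.disjoint_of_nodup_append hnd hy (by simp [h, hM])
    have hvpos : ∀ y ∈ v, 0 < y := fun y hy => hpos y (by simp [hy])
    obtain ⟨y, hy⟩ := List.exists_mem_of_ne_nil v hv0
    have hy0 := hvpos y hy
    have hyM := hvM y hy
    have hmax : y ≤ listMax v := le_listMax hy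
    have hstep := stackSortInit_append_pair hv0 hvM (by omega : M ≠ 1)
    rw [min_eq_right (by omega : 1 ≤ M)] at hstep
    have hmax' : listMax (stackSortInit v ++ [listMax v, 1]) = listMax v :=
      listMax_eq_of_mem (by simp) fun z hz => by
        rcases List.mem_append.1 hz with hz | hz
        · exact (lt_listMax_of_mem_stackSortInit
            (hnd.sublist (List.sublist_append_left _ _)) hz).le
        · rcases List.mem_pair.1 hz with rfl | rfl <;> omega
    exact ⟨stackSortInit v, by rw [hstep, hmax']⟩

theorem endsWithMaxOne_stackSortInit_iterate_iff {l : List ℕ} (hnd : l.Nodup)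
    (hpos : ∀ y ∈ l, 0 < y) {k : ℕ} (hk : k + 2 ≤ l.length) :
    EndsWithMaxOne (stackSortInit^[k] l) ↔ EndsWithMaxOne l := by
  induction k generalizing l with
  | zero => rfl
  | succ k ih =>
    rw [Function.iterate_succ_apply, ih (stackSortInit_nodup hnd)
      (fun y hy => hpos y (mem_of_mem_stackSortInit hnd hy))
      (by rw [length_stackSortInit hnd]; omega),
      endsWithMaxOne_stackSortInit_iff hnd hpos (by omega)]

theorem endsWithMaxOne_iff_not_pairwise {u : List ℕ} (hu : u.Perm [1, 2]) :
    EndsWithMaxOne u ↔ ¬ u.Pairwise (· < ·) := by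
  rcases List.perm_pair.1 hu with rfl | rfl
  · refine iff_of_false (fun ⟨v, hv⟩ => ?_) (by simp)
    obtain ⟨-, h⟩ := List.append_inj' (hv.symm.trans (List.nil_append _).symm) rfl
    simp at h
  · exact iff_of_true ⟨[], rfl⟩ (by simp)

theorem IsPermWord.mem_iff_of_append_pair {n x : ℕ} {w : List ℕ}
    (h : IsPermWord n (w ++ [n, x])) :
    w.Nodup ∧ 0 < x ∧ x < n ∧ ∀ y, y ∈ w ↔ 0 < y ∧ y < n ∧ y ≠ x := by
  have hnd : (w ++ [n, x]).Nodup := h.nodup_iff.2 List.nodup_range'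
  have hmem : ∀ y, y ∈ w ++ [n, x] ↔ 0 < y ∧ y ≤ n := fun y => by
    rw [h.mem_iff, List.mem_range'_1]
    omega
  obtain ⟨hw, hnx, hdisj⟩ : w.Nodup ∧ n ≠ x ∧ ∀ y ∈ w, y ≠ n ∧ y ≠ x := by
    simpa [List.nodup_append] using hnd
  refine ⟨hw, ?_, ?_, fun y => ⟨fun hy => ?_, fun hy => ?_⟩⟩
  · exact ((hmem x).1 (by simp)).1
  · have := (hmem x).1 (by simp)
    omega
  · have := (hmem y).1 (by simp [hy])
    have := hdisj y hy
    omega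
  · have := (hmem y).2 ⟨hy.1, hy.2.1.le⟩
    simp only [List.mem_append, List.mem_pair] at this
    exact this.resolve_right (by omega)

theorem ssc_append_pair_eq_iff {n b c k : ℕ} {a : List ℕ} (hπ : IsPermWord n (a ++ [b, c]))
    (hab : ∀ y ∈ a, y < b) (hcb : c < b) (hlen : a.length = k + 4) :
    ssc (a ++ [b, c]) = k + 3 ↔ listMax (stackSortInit^[k + 2] a) < c ∧
      ¬ ((stackSortInit^[k + 2] a).Pairwise (· < ·) ∧
        listMax (stackSortInit^[k + 1] a) < c) := by
  have hnd' : (a ++ [b, c]).Nodup := hπ.nodup_iff.2 List.nodup_range'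
  have hnd : a.Nodup := hnd'.sublist (List.sublist_append_left _ _)
  have hca : c ∉ a := fun h => List.disjoint_of_nodup_append hnd' h (by simp)
  have hsingle : (stackSortInit^[k + 1 + 2] a).Pairwise (· < ·) := by
    obtain ⟨y, hy⟩ := (List.length_eq_one_iff (l := stackSortInit^[k + 1 + 2] a)).1
      (by rw [length_stackSortInit_iterate hnd, hlen]; omega)
    exact hy ▸ List.pairwise_singleton _ y
  rw [ssc_eq_succ_iff hπ (k + 2), show k + 2 + 1 = k + 1 + 2 from rfl,
    pairwise_stackSortInit_iterate_append_pair_iff hnd hab hcb hca (by omega),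
    pairwise_stackSortInit_iterate_append_pair_iff hnd hab hcb hca (by omega),
    and_iff_right hsingle]

theorem ssc_append_max_pair_eq_iff {k x : ℕ} {w : List ℕ}
    (hπ : IsPermWord (k + 6) (w ++ [k + 6, x])) :
    ssc (w ++ [k + 6, x]) = k + 3 ↔ x = 3 ∨ (4 ≤ x ∧ EndsWithMaxOne w) := by
  obtain ⟨hnd, hx0, hxn, hw⟩ := hπ.mem_iff_of_append_pair
  have hlen : w.length = k + 4 := by simpa using hπ.length_eq
  rw [ssc_append_pair_eq_iff hπ (fun y hy => ((hw y).1 hy).2.1) hxn hlen]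
  have hperm : ∀ {j : ℕ} (E : List ℕ) (c : ℕ), E.Nodup → c < k + 6 →
      (∀ y, y ∈ E ↔ 0 < y ∧ y ≤ c ∧ y ≠ x) → k + 4 = j + E.length →
      (stackSortInit^[j] w).Perm E :=
    fun E c hE hc hmem hj => stackSortInit_iterate_perm_of_forall_mem_iff (c := c) hnd hE
      (fun y => by rw [hmem, hw]; omega) (hlen.trans hj)
  rcases (by omega : x ≤ 2 ∨ x = 3 ∨ 4 ≤ x) with hx | rfl | hx
  · have h2 : listMax (stackSortInit^[k + 2] w) = 3 := by
      interval_cases x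
      · exact (hperm [2, 3] 3 (by decide) (by omega) (fun y => by simp; omega) rfl).listMax_eq
      · exact (hperm [1, 3] 3 (by decide) (by omega) (fun y => by simp; omega) rfl).listMax_eq
    exact iff_of_false (fun h => by omega) (by omega)
  · have h2 := hperm [1, 2] 2 (by decide) (by omega) (fun y => by simp; omega) rfl
    have h3 := hperm [1, 2, 4] 4 (by decide) (by omega) (fun y => by simp; omega) rfl
    rw [h2.listMax_eq, h3.listMax_eq]
    exact iff_of_true ⟨by decide, fun h => absurd h.2 (by decide)⟩ (Or.inl rfl)
  · have h2 := hperm [1, 2] 2 (by decide) (by omega) (fun y => by simp; omega) rfl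
    have h3 := hperm [1, 2, 3] 3 (by decide) (by omega) (fun y => by simp; omega) rfl
    rw [h2.listMax_eq, h3.listMax_eq, ← (endsWithMaxOne_iff_not_pairwise h2).symm.trans
      (endsWithMaxOne_stackSortInit_iterate_iff hnd (fun y hy => ((hw y).1 hy).1) (by omega)),
      show listMax [1, 2] = 2 from rfl, show listMax [1, 2, 3] = 3 from rfl]
    constructor
    · rintro ⟨-, h⟩
      exact Or.inr ⟨hx, fun hs => h ⟨hs, by omega⟩⟩
    · rintro (rfl | ⟨-, h⟩)
      · omega
      · exact ⟨by omega, fun hs => h hs.1⟩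

/-- For all `n ≥ 6`, a permutation `π` of `{1,…,n}` with the letter `n` in the
second-to-last position satisfies `ssc(π) = n−3` iff (a) `π_n = 3`; or
(b) `3 < π_n < n−1` and `π` ends with `(n−1), 1, n, π_n`; or (c) `π_n = n−1`
and `π` ends with `(n−2), 1, n, (n−1)`. -/
theorem ssc_eq_n_sub_three_iff_of_second_to_last (n : ℕ) (hn : 6 ≤ n) (π : List ℕ)
    (hπ : IsPermWord n π) (w : List ℕ) (x : ℕ) (hform : π = w ++ [n, x]) :
    ssc π = n - 3 ↔
      x = 3 ∨
      (3 < x ∧ x < n - 1 ∧ ∃ v : List ℕ, π = v ++ [n - 1, 1, n, x]) ∨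
      (x = n - 1 ∧ ∃ v : List ℕ, π = v ++ [n - 2, 1, n, n - 1]) := by
  obtain ⟨k, rfl⟩ : ∃ k, n = k + 6 := ⟨n - 6, by omega⟩
  subst hform
  obtain ⟨-, -, hxn, hw⟩ := hπ.mem_iff_of_append_pair
  have hsuffix (r : ℕ) :
      (∃ v, w ++ [k + 6, x] = v ++ [r, 1, k + 6, x]) ↔ ∃ v, w = v ++ [r, 1] := by
    simp only [show ∀ v : List ℕ, v ++ [r, 1, k + 6, x] = (v ++ [r, 1]) ++ [k + 6, x] by simp,
      List.append_left_inj]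
  rw [show k + 6 - 3 = k + 3 by omega, show k + 6 - 1 = k + 5 by omega,
    show k + 6 - 2 = k + 4 by omega, ssc_append_max_pair_eq_iff hπ, EndsWithMaxOne]
  rcases (by omega : x < k + 5 ∨ x = k + 5) with hx | rfl
  · rw [listMax_eq_of_mem ((hw (k + 5)).2 (by omega)) fun y hy => by have := (hw y).1 hy; omega,
      hsuffix]
    simp [show x ≠ k + 5 by omega, hx, Nat.lt_iff_add_one_le]
  · rw [listMax_eq_of_mem ((hw (k + 4)).2 (by omega)) fun y hy => by have := (hw y).1 hy; omega]
    simp [hsuffix]
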